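/- Let X be a subspace of the Sorgenfrey line ℝₗ and suppose there exist an uncountable subset Z ⊆ X and a strictly decreasing function f : Z → X (with respect to the usual linear order of the reals). If a topological group G contains a subspace homeomorphic to X, then G contains an uncountable discrete subspace; in particular the spread of G is uncountable. -/

import Mathlib

open Set Topology

def SorgenfreyLine : Type := ℝ

notation "ℝₗ" => SorgenfreyLine

noncomputable instance : Field ℝₗ := inferInstanceAs (Field ℝ)

noncomputable instance : LinearOrder ℝₗ := inferInstanceAs (LinearOrder ℝ)

instance : IsStrictOrderedRing ℝₗ := inferInstanceAs (IsStrictOrderedRing ℝ)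

instance : TopologicalSpace ℝₗ :=
  TopologicalSpace.generateFrom {s : Set ℝₗ | ∃ a b : ℝₗ, a < b ∧ s = Set.Ico a b}

/-- The spread of a topological space: the supremum of cardinalities of discrete subspaces. -/
noncomputable def spread (X : Type*) [TopologicalSpace X] : Cardinal :=
  sSup {c : Cardinal | ∃ D : Set X, DiscreteTopology D ∧ Cardinal.mk D = c}

def Cometrizable (Y : Type*) [t : TopologicalSpace Y] : Prop :=
  ∃ τ : TopologicalSpace Y, t ≤ τ ∧ @TopologicalSpace.MetrizableSpace Y τ ∧
    ∀ y : Y, ∀ U ∈ nhds y, ∃ V ∈ nhds y, V ⊆ U ∧ IsClosed[τ] V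

def IsKDense {X : Type*} [TopologicalSpace X] (D : Set X) : Prop :=
  ∀ K : Set X, IsCompact K → ∃ K' : Set X, IsCompact K' ∧ K ⊆ K' ∧ K' ⊆ closure (D ∩ K')

def KSeparable (X : Type*) [TopologicalSpace X] : Prop :=
  ∃ D : Set X, D.Countable ∧ IsKDense D

/-!
Let `e : X → G` be the embedding and `c z = e z * e (f z)`. In a topological group, if `c j → c i`
and one factor converges, so does the other; in the Sorgenfrey line, `x_j → x` forces `x ≤ x_j`
eventually. Hence if `j ↓ i` then `e j → e i`, and `c j → c i` would give `f j → f i` although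
`f j < f i`; symmetrically, if `f j ↓ f i` then `c j → c i` would give `j → i` although `j < i`.
Except at the countably many left jumps of `f` (each contains its own rational), `f j ↓ f i` as
`j ↑ i`, so `c i` is isolated from all `c j` with `j ≠ i` close to `i` in the usual metric.
Pigeonholing the isolation radii, and then the positions at the scale of the radius, leaves
uncountably many such points, each within the isolation radius of every other; their images under
`c` form the discrete set.
-/

open Filter

noncomputable instance : FloorRing ℝₗ := inferInstanceAs (FloorRing ℝ)

namespace SorgenfreyLine

theorem isTopologicalBasis_Ico :
    TopologicalSpace.IsTopologicalBasis {s : Set ℝₗ | ∃ a b : ℝₗ, a < b ∧ s = Ico a b} where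
  exists_subset_inter := by
    rintro _ ⟨a, b, -, rfl⟩ _ ⟨c, d, -, rfl⟩ x hx
    rw [Ico_inter_Ico] at hx ⊢
    exact ⟨_, ⟨_, _, hx.1.trans_lt hx.2, rfl⟩, hx, subset_rfl⟩
  sUnion_eq := eq_univ_of_forall fun x =>
    mem_sUnion_of_mem (by simp : x ∈ Ico x (x + 1)) ⟨x, x + 1, by simp, rfl⟩
  eq_generateFrom := rfl

theorem nhds_basis_Ico (x : ℝₗ) :
    (𝓝 x).HasBasis (fun ε : ℝₗ => 0 < ε) (fun ε => Ico x (x + ε)) := by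
  refine ⟨fun U => isTopologicalBasis_Ico.mem_nhds_iff.trans ⟨?_, ?_⟩⟩
  · rintro ⟨_, ⟨a, b, -, rfl⟩, hx, hU⟩
    exact ⟨b - x, sub_pos.2 hx.2, fun y hy => hU ⟨hx.1.trans hy.1, by linarith [hy.2]⟩⟩
  · rintro ⟨ε, hε, hU⟩
    exact ⟨_, ⟨x, x + ε, by simpa using hε, rfl⟩, by simpa using hε, hU⟩

theorem Ici_mem_nhds (x : ℝₗ) : Ici x ∈ 𝓝 x :=
  mem_of_superset ((nhds_basis_Ico x).mem_of_mem one_pos) Ico_subset_Ici_self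

theorem exists_nhds_forall_le_of_tendsto {ι α Y : Type*} [TopologicalSpace α]
    [TopologicalSpace Y] {u : ι → α} {c : ι → Y} {v : ι → ℝₗ} {i : ι}
    (h : Tendsto v (comap u (𝓝 (u i)) ⊓ comap c (𝓝 (c i))) (𝓝 (v i))) :
    ∃ U ∈ 𝓝 (u i), ∃ W ∈ 𝓝 (c i), ∀ j, u j ∈ U → c j ∈ W → v i ≤ v j := by
  obtain ⟨_, ⟨U, hU, hUs⟩, _, ⟨W, hW, hWt⟩, hsub⟩ :=
    mem_inf_iff_superset.1 (h (Ici_mem_nhds (v i)))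
  exact ⟨U, hU, W, hW, fun j hj hj' => hsub ⟨hUs hj, hWt hj'⟩⟩

end SorgenfreyLine

theorem Set.exists_not_countable_inter_preimage_singleton {ι β : Type*} [Countable β]
    {s : Set ι} (hs : ¬ s.Countable) (g : ι → β) : ∃ b, ¬ (s ∩ g ⁻¹' {b}).Countable := by
  by_contra! h
  refine hs ((countable_iUnion h).mono fun x hx => ?_)
  exact mem_iUnion_of_mem (g x) ⟨hx, rfl⟩

theorem exists_not_countable_subset_forall_abs_sub_lt {ι K : Type*} [Field K] [LinearOrder K]
    [IsStrictOrderedRing K] [FloorRing K] {s : Set ι} (hs : ¬ s.Countable) (x ε : ι → K)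
    (hε : ∀ i ∈ s, 0 < ε i) :
    ∃ t ⊆ s, ¬ t.Countable ∧ ∀ i ∈ t, ∀ j ∈ t, |x j - x i| < ε i := by
  obtain ⟨⟨n, k⟩, ht⟩ := exists_not_countable_inter_preimage_singleton hs
    fun i => (⌈(ε i)⁻¹⌉₊, ⌊⌈(ε i)⁻¹⌉₊ * x i⌋)
  refine ⟨_, inter_subset_left, ht, ?_⟩
  rintro i ⟨hi, hig⟩ j ⟨-, hjg⟩
  simp only [mem_preimage, mem_singleton_iff, Prod.ext_iff] at hig hjg
  have hn : (ε i)⁻¹ ≤ n := hig.1 ▸ Nat.le_ceil _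
  have hn₀ : (0 : K) < n := (inv_pos.2 (hε i hi)).trans_le hn
  have h := Int.abs_sub_lt_one_of_floor_eq_floor (hjg.2.trans hig.2.symm)
  rw [hjg.1, hig.1, ← mul_sub, abs_mul, Nat.abs_cast] at h
  calc |x j - x i| < 1 / n := (lt_div_iff₀' hn₀).2 h
    _ ≤ ε i := by rw [one_div]; exact inv_le_of_inv_le₀ (hε i hi) hn

theorem countable_setOf_exists_lt_forall_lt_le {α K : Type*} [LinearOrder α] [Field K]
    [LinearOrder K] [IsStrictOrderedRing K] [Archimedean K] (f : α → K) :
    {i | ∃ b, f i < b ∧ ∀ j < i, b ≤ f j}.Countable := by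
  have (i : {i | ∃ b, f i < b ∧ ∀ j < i, b ≤ f j}) : ∃ r : ℚ, f i < r ∧ ∀ j < i.1, r < f j := by
    obtain ⟨b, hb, hjb⟩ := i.2
    obtain ⟨r, hr, hrb⟩ := exists_rat_btwn hb
    exact ⟨r, hr, fun j hj => hrb.trans_le (hjb j hj)⟩
  choose r hr hrj using this
  have hr_anti : StrictAnti r := fun i i' hii' =>
    Rat.cast_lt.1 <| (hrj i' i hii').trans (hr i)
  exact countable_coe_iff.1 hr_anti.injective.countable

theorem Filter.Tendsto.of_mul_left {ι G : Type*} [Group G] [TopologicalSpace G]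
    [IsTopologicalGroup G] {l : Filter ι} {p q : ι → G} {a b : G} (hp : Tendsto p l (𝓝 a))
    (hpq : Tendsto (fun j => p j * q j) l (𝓝 (a * b))) : Tendsto q l (𝓝 b) := by
  simpa using hp.inv.mul hpq

theorem Filter.Tendsto.of_mul_right {ι G : Type*} [Group G] [TopologicalSpace G]
    [IsTopologicalGroup G] {l : Filter ι} {p q : ι → G} {a b : G} (hq : Tendsto q l (𝓝 b))
    (hpq : Tendsto (fun j => p j * q j) l (𝓝 (a * b))) : Tendsto p l (𝓝 a) := by
  simpa using hpq.mul hq.inv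

theorem discreteTopology_image_of_forall_mem_nhds {ι Y : Type*} [TopologicalSpace Y]
    {c : ι → Y} {t : Set ι} {W : ι → Set Y} (hW : ∀ i ∈ t, W i ∈ 𝓝 (c i))
    (hsep : ∀ i ∈ t, ∀ j ∈ t, c j ∈ W i → j = i) : DiscreteTopology (c '' t) := by
  rw [discreteTopology_subtype_iff]
  rintro _ ⟨i, hi, rfl⟩
  rw [inf_principal_eq_bot]
  filter_upwards [inter_mem_nhdsWithin {c i}ᶜ (hW i hi)]
  rintro _ ⟨hne, hWi⟩ ⟨j, hj, rfl⟩
  exact hne (congrArg c (hsep i hi j hj hWi))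

theorem mk_le_spread {X : Type*} [TopologicalSpace X] {D : Set X} (hD : DiscreteTopology D) :
    Cardinal.mk D ≤ spread X :=
  le_csSup ⟨Cardinal.mk X, by rintro _ ⟨D', -, rfl⟩; exact Cardinal.mk_set_le D'⟩ ⟨D, hD, rfl⟩

section GraphProd

variable {G : Type*} [Group G] [TopologicalSpace G] [IsTopologicalGroup G] {X Z : Set ℝₗ}

def graphProd (e : X → G) (hZX : Z ⊆ X) (f : Z → X) (z : Z) : G :=
  e (inclusion hZX z) * e (f z)

variable {e : X → G} (hZX : Z ⊆ X) (f : Z → X) (he : IsEmbedding e)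
include hZX he

theorem tendsto_apply_of_tendsto_graphProd {l : Filter Z} {i : Z}
    (hval : Tendsto Subtype.val l (𝓝 (i : ℝₗ)))
    (hc : Tendsto (graphProd e hZX f) l (𝓝 (graphProd e hZX f i))) :
    Tendsto (fun j => (f j : ℝₗ)) l (𝓝 (f i : ℝₗ)) := by
  have hincl : Tendsto (fun j => e (inclusion hZX j)) l (𝓝 (e (inclusion hZX i))) :=
    he.continuous.continuousAt.tendsto.comp (IsInducing.subtypeVal.tendsto_nhds_iff.2 hval)
  exact IsInducing.subtypeVal.tendsto_nhds_iff.1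
    (he.isInducing.tendsto_nhds_iff.2 (hincl.of_mul_left hc))

theorem tendsto_val_of_tendsto_graphProd {l : Filter Z} {i : Z}
    (hf : Tendsto (fun j => (f j : ℝₗ)) l (𝓝 (f i : ℝₗ)))
    (hc : Tendsto (graphProd e hZX f) l (𝓝 (graphProd e hZX f i))) :
    Tendsto Subtype.val l (𝓝 (i : ℝₗ)) := by
  have hf' : Tendsto (fun j => e (f j)) l (𝓝 (e (f i))) :=
    he.continuous.continuousAt.tendsto.comp (IsInducing.subtypeVal.tendsto_nhds_iff.2 hf)
  exact (IsInducing.subtypeVal.tendsto_nhds_iff (f := inclusion hZX)).1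
    (he.isInducing.tendsto_nhds_iff.2 (hf'.of_mul_right hc))

variable (hf : StrictAnti fun z : Z => (f z : ℝₗ))
include hf

theorem exists_forall_mem_Ico_graphProd_mem_imp_le (i : Z) :
    ∃ ε > 0, ∃ W ∈ 𝓝 (graphProd e hZX f i),
      ∀ j : Z, (j : ℝₗ) ∈ Ico (i : ℝₗ) (i + ε) → graphProd e hZX f j ∈ W → j ≤ i := by
  obtain ⟨U, hU, W, hW, hUW⟩ := SorgenfreyLine.exists_nhds_forall_le_of_tendsto <|
    tendsto_apply_of_tendsto_graphProd hZX f he (tendsto_comap.mono_left inf_le_left)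
      (tendsto_comap.mono_left inf_le_right)
  obtain ⟨ε, hε, hεU⟩ := (SorgenfreyLine.nhds_basis_Ico _).mem_iff.1 hU
  exact ⟨ε, hε, W, hW, fun j hj hjW => hf.le_iff_ge.1 (hUW j (hεU hj) hjW)⟩

theorem exists_forall_mem_Ioc_graphProd_mem_imp_le {i : Z}
    (hi : ∀ b, (f i : ℝₗ) < b → ∃ j < i, (f j : ℝₗ) < b) :
    ∃ ε > 0, ∃ W ∈ 𝓝 (graphProd e hZX f i),
      ∀ j : Z, (j : ℝₗ) ∈ Ioc ((i : ℝₗ) - ε) i → graphProd e hZX f j ∈ W → i ≤ j := by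
  obtain ⟨U, hU, W, hW, hUW⟩ := SorgenfreyLine.exists_nhds_forall_le_of_tendsto <|
    tendsto_val_of_tendsto_graphProd hZX f he (tendsto_comap.mono_left inf_le_left)
      (tendsto_comap.mono_left inf_le_right)
  obtain ⟨δ, hδ, hδU⟩ := (SorgenfreyLine.nhds_basis_Ico _).mem_iff.1 hU
  obtain ⟨j₀, hj₀i, hj₀⟩ := hi _ (lt_add_of_pos_right _ hδ)
  refine ⟨i - j₀, sub_pos.2 hj₀i, W, hW, fun j hj hjW => hUW j (hδU ⟨hf.antitone hj.2, ?_⟩) hjW⟩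
  exact (hf (show j₀ < j by simpa using hj.1)).trans hj₀

theorem exists_forall_abs_sub_lt_graphProd_mem_imp_eq {i : Z}
    (hi : ∀ b, (f i : ℝₗ) < b → ∃ j < i, (f j : ℝₗ) < b) :
    ∃ ε > 0, ∃ W ∈ 𝓝 (graphProd e hZX f i),
      ∀ j : Z, |(j : ℝₗ) - i| < ε → graphProd e hZX f j ∈ W → j = i := by
  obtain ⟨ε₁, hε₁, W₁, hW₁, hright⟩ := exists_forall_mem_Ico_graphProd_mem_imp_le hZX f he hf i
  obtain ⟨ε₂, hε₂, W₂, hW₂, hleft⟩ := exists_forall_mem_Ioc_graphProd_mem_imp_le hZX f he hf hi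
  refine ⟨min ε₁ ε₂, lt_min hε₁ hε₂, W₁ ∩ W₂, inter_mem hW₁ hW₂, fun j hj hjW => ?_⟩
  rw [abs_sub_lt_iff, lt_min_iff, lt_min_iff] at hj
  rcases le_total j i with hji | hij
  · exact le_antisymm hji (hleft j ⟨by linarith, hji⟩ hjW.2)
  · exact le_antisymm (hright j ⟨hij, by linarith⟩ hjW.1) hij

theorem exists_discreteTopology_not_countable_of_strictAnti (hZ : ¬ Z.Countable) :
    ∃ D : Set G, DiscreteTopology D ∧ ¬ D.Countable := by
  set leftCont := {i : Z | ∀ b, (f i : ℝₗ) < b → ∃ j < i, (f j : ℝₗ) < b}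
  have hleftCont : ¬ leftCont.Countable := fun h => hZ <| countable_coe_iff.1 <|
    countable_univ_iff.1 <|
      (h.union (countable_setOf_exists_lt_forall_lt_le fun j : Z => (f j : ℝₗ))).mono
        fun i _ => (em (i ∈ leftCont)).imp id fun hi => by simpa [leftCont] using hi
  choose! ε hε W hW hsep using fun i (hi : i ∈ leftCont) =>
    exists_forall_abs_sub_lt_graphProd_mem_imp_eq hZX f he hf hi
  obtain ⟨t, htl, ht, htε⟩ := exists_not_countable_subset_forall_abs_sub_lt hleftCont (↑) ε hε
  have hsep' : ∀ i ∈ t, ∀ j ∈ t, graphProd e hZX f j ∈ W i → j = i :=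
    fun i hi j hj => hsep i (htl hi) j (htε i hi j hj)
  refine ⟨_, discreteTopology_image_of_forall_mem_nhds (fun i hi => hW i (htl hi)) hsep',
    fun h => ht (countable_of_injective_of_countable_image (fun i hi j hj hij => ?_) h)⟩
  exact hsep' j hj i hi (hij ▸ mem_of_mem_nhds (hW j (htl hj)))

end GraphProd

/-- If $X$ is a subspace of the Sorgenfrey line admitting an uncountable $Z \subseteq X$ and a
strictly decreasing $f : Z \to X$, then any topological group containing a copy of $X$
contains an uncountable discrete subspace; in particular its spread is uncountable. -/
theorem uncountable_discrete_of_strictAnti {G : Type*} [Group G] [TopologicalSpace G]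
    [IsTopologicalGroup G] (X : Set ℝₗ) (Z : Set ℝₗ) (hZX : Z ⊆ X) (hZ : ¬ Z.Countable)
    (f : Z → X) (hf : StrictAnti fun z : Z => (f z : ℝₗ))
    (S : Set G) (h : Nonempty (S ≃ₜ X)) :
    (∃ D : Set G, DiscreteTopology D ∧ ¬ D.Countable) ∧ Cardinal.aleph0 < spread G := by
  obtain ⟨E⟩ := h
  obtain ⟨D, hD, hDc⟩ := exists_discreteTopology_not_countable_of_strictAnti hZX f
    (IsEmbedding.subtypeVal.comp E.symm.isEmbedding) hf hZ
  refine ⟨⟨D, hD, hDc⟩, lt_of_lt_of_le ?_ (mk_le_spread hD)⟩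
  rwa [← not_le, Cardinal.le_aleph0_iff_set_countable]
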